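/- arXiv:2105.07518 — 10 statements merged into one kernel-verified Lean document; each statement's English description precedes it below -/
import Mathlib

section
/- Let n and b be positive integers with 2n ≤ b. Then the number of functions f : Fin n → Fin b such that no element j of Fin b has exactly one preimage under f is at most (4n/b)^{n/2} · b^n (as real numbers). Equivalently, if n balls are thrown independently and uniformly at random into b bins, then with probability at least 1 − (4n/b)^{n/2} some bin contains exactly one ball. -/
open Finset

lemma count_le (n b : ℕ) (hkb : n / 2 ≤ b) :
    (Finset.univ.filter (fun f : Fin n → Fin b =>
        ∀ j : Fin b, (Finset.univ.filter (fun x : Fin n => f x = j)).card ≠ 1)).card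
      ≤ b.choose (n / 2) * (n / 2) ^ n := by
  set k := n / 2 with hk
  have hsub : (Finset.univ.filter (fun f : Fin n → Fin b =>
        ∀ j : Fin b, (Finset.univ.filter (fun x : Fin n => f x = j)).card ≠ 1))
      ⊆ (Finset.univ.powersetCard k).biUnion
          (fun S => Fintype.piFinset fun _ : Fin n => S) := by
    intro f hf
    rw [mem_filter] at hf
    obtain ⟨-, hf⟩ := hf
    set I : Finset (Fin b) := Finset.image f Finset.univ with hI
    have hcard : 2 * I.card ≤ n := by
      have h2 : ∀ j ∈ I, 2 ≤ (Finset.univ.filter (fun x : Fin n => f x = j)).card := by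
        intro j hj
        obtain ⟨x, -, hx⟩ := Finset.mem_image.1 hj
        have hne : (Finset.univ.filter (fun x : Fin n => f x = j)).card ≠ 0 := by
          simp only [ne_eq, Finset.card_eq_zero, Finset.filter_eq_empty_iff]
          push_neg
          exact ⟨x, Finset.mem_univ x, hx⟩
        have h1 := hf j
        omega
      have hsum : ∑ j : Fin b, (Finset.univ.filter (fun x : Fin n => f x = j)).card = n := by
        rw [← Finset.card_eq_sum_card_fiberwise (fun x _ => Finset.mem_univ (f x))]
        simp
      calc 2 * I.card = ∑ _j ∈ I, 2 := by rw [Finset.sum_const]; ring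
        _ ≤ ∑ j ∈ I, (Finset.univ.filter (fun x : Fin n => f x = j)).card :=
            Finset.sum_le_sum h2
        _ ≤ ∑ j : Fin b, (Finset.univ.filter (fun x : Fin n => f x = j)).card :=
            Finset.sum_le_sum_of_subset (Finset.subset_univ I)
        _ = n := hsum
    have hIk : I.card ≤ k := by omega
    obtain ⟨S, hIS, hScard⟩ := Finset.exists_superset_card_eq hIk (by simpa using hkb)
    refine Finset.mem_biUnion.2 ⟨S, Finset.mem_powersetCard_univ.2 hScard, ?_⟩
    exact Fintype.mem_piFinset.2 fun i => hIS (Finset.mem_image_of_mem f (Finset.mem_univ i))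
  calc _ ≤ ((Finset.univ.powersetCard k).biUnion
          (fun S => Fintype.piFinset fun _ : Fin n => S)).card := Finset.card_le_card hsub
    _ ≤ ∑ S ∈ Finset.univ.powersetCard k, (Fintype.piFinset fun _ : Fin n => S).card :=
        Finset.card_biUnion_le
    _ ≤ ∑ S ∈ Finset.univ.powersetCard k, k ^ n := by
        refine Finset.sum_le_sum fun S hS => ?_
        rw [Fintype.card_piFinset]
        simp [Finset.mem_powersetCard_univ.1 hS]
    _ = b.choose k * k ^ n := by
        rw [Finset.sum_const, Finset.card_powersetCard, Finset.card_univ, Fintype.card_fin,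
          smul_eq_mul]

lemma fac_bound (k : ℕ) : ((k : ℝ)) ^ k ≤ 3 ^ k * ((Nat.factorial k : ℕ) : ℝ) := by
  have hfpos : (0:ℝ) < ((Nat.factorial k : ℕ) : ℝ) := by exact_mod_cast k.factorial_pos
  have he : ((k : ℝ)) ^ k / ((Nat.factorial k : ℕ) : ℝ) ≤ Real.exp k := by
    refine le_trans ?_ (Real.sum_le_exp_of_nonneg (by positivity) (k + 1))
    exact Finset.single_le_sum (f := fun i => (k:ℝ) ^ i / ((Nat.factorial i : ℕ) : ℝ))
      (fun i _ => by positivity) (Finset.self_mem_range_succ k)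
  have h3 : Real.exp k ≤ 3 ^ k := by
    rw [← Real.exp_one_pow]
    exact pow_le_pow_left₀ (Real.exp_pos 1).le
      (Real.exp_one_lt_d9.le.trans (by norm_num)) k
  calc ((k : ℝ)) ^ k = ((k : ℝ)) ^ k / ((Nat.factorial k : ℕ) : ℝ) * ((Nat.factorial k : ℕ) : ℝ) := by field_simp
    _ ≤ Real.exp k * ((Nat.factorial k : ℕ) : ℝ) := by
        exact mul_le_mul_of_nonneg_right he hfpos.le
    _ ≤ 3 ^ k * ((Nat.factorial k : ℕ) : ℝ) := mul_le_mul_of_nonneg_right h3 hfpos.le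

/-- Balls into bins: if `2n ≤ b`, the number of functions `f : Fin n → Fin b`
such that no bin `j : Fin b` has exactly one preimage is at most
`(4n/b)^(n/2) * b^n` (as real numbers). -/
theorem stmt_0 (n b : ℕ) (hn : 0 < n) (hb : 0 < b) (hnb : 2 * n ≤ b) :
    ((Finset.univ.filter (fun f : Fin n → Fin b =>
        ∀ j : Fin b, (Finset.univ.filter (fun x : Fin n => f x = j)).card ≠ 1)).card : ℝ)
      ≤ (4 * (n : ℝ) / (b : ℝ)) ^ ((n : ℝ) / 2) * (b : ℝ) ^ n := by
  have hkb : n / 2 ≤ b := le_trans (Nat.div_le_self n 2) (by omega)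
  have h1 : ((Finset.univ.filter (fun f : Fin n → Fin b =>
      ∀ j : Fin b, (Finset.univ.filter (fun x : Fin n => f x = j)).card ≠ 1)).card : ℝ)
      ≤ (b.choose (n / 2) : ℝ) * ((n / 2 : ℕ) : ℝ) ^ n := by
    exact_mod_cast count_le n b hkb
  refine h1.trans ?_
  set k := n / 2 with hkdef
  set K : ℝ := (k : ℝ) with hKdef
  set N : ℝ := (n : ℝ) with hNdef
  set B : ℝ := (b : ℝ) with hBdef
  have hNpos : (0:ℝ) < N := by rw [hNdef]; exact_mod_cast hn
  have hBpos : (0:ℝ) < B := by rw [hBdef]; exact_mod_cast hb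
  have hBN : 2 * N ≤ B := by rw [hNdef, hBdef]; exact_mod_cast hnb
  have hk2 : K ≤ N / 2 := by
    rw [hKdef, hNdef, le_div_iff₀ (by norm_num)]
    have := Nat.div_mul_le_self n 2
    exact_mod_cast this
  have hKB : K ≤ B := le_trans hk2 (by linarith)
  have hKnn : (0:ℝ) ≤ K := by positivity
  rcases Nat.eq_zero_or_pos k with hk0 | hkpos
  · have hn1 : K ^ n = 0 := by
      rw [hk0] at hKdef
      simp [hKdef, hNdef]
      omega
    rw [hn1, mul_zero]
    positivity
  · have hKpos : (0:ℝ) < K := by rw [hKdef]; exact_mod_cast hkpos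
    have hkn : k ≤ n := Nat.div_le_self n 2
    -- step: choose * K^n ≤ B^k * 3^k * K^(n-k)
    have hchoose : (b.choose k : ℝ) ≤ B ^ k / ((Nat.factorial k : ℕ) : ℝ) := by
      rw [hBdef]
      exact_mod_cast Nat.choose_le_pow_div k b
    have hfpos : (0:ℝ) < ((Nat.factorial k : ℕ) : ℝ) := by exact_mod_cast k.factorial_pos
    have hinv : (1:ℝ) / ((Nat.factorial k : ℕ) : ℝ) ≤ 3 ^ k / K ^ k := by
      rw [div_le_div_iff₀ hfpos (by positivity), one_mul]
      exact fac_bound k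
    have step1 : (b.choose k : ℝ) * K ^ n ≤ B ^ k * 3 ^ k * K ^ (n - k) := by
      calc (b.choose k : ℝ) * K ^ n ≤ (B ^ k / ((Nat.factorial k : ℕ) : ℝ)) * K ^ n :=
            mul_le_mul_of_nonneg_right hchoose (by positivity)
        _ = (B ^ k * K ^ n) * (1 / ((Nat.factorial k : ℕ) : ℝ)) := by ring
        _ ≤ (B ^ k * K ^ n) * (3 ^ k / K ^ k) :=
            mul_le_mul_of_nonneg_left hinv (by positivity)
        _ = B ^ k * 3 ^ k * (K ^ n / K ^ k) := by ring
        _ = B ^ k * 3 ^ k * K ^ (n - k) := by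
            rw [pow_sub₀ K (ne_of_gt hKpos) hkn]; ring
    refine step1.trans ?_
    -- now the rpow part
    have hcast : ((n - k : ℕ) : ℝ) = N - K := by
      push_cast [Nat.cast_sub hkn]; ring
    have key : (3:ℝ) ^ k * K ^ (n - k) ≤ (4 * N / B) ^ (N / 2) * B ^ (n - k) := by
      have h3 : (3:ℝ) ^ k = (3:ℝ) ^ K := by
        rw [Real.rpow_natCast]
      have hKp : K ^ (n - k) = K ^ (N - K) := by
        rw [← Real.rpow_natCast K (n - k), hcast]
      have hBp : B ^ (n - k) = B ^ (N - K) := by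
        rw [← Real.rpow_natCast B (n - k), hcast]
      rw [h3, hKp, hBp]
      set δ : ℝ := N / 2 - K with hδ
      have hδnn : 0 ≤ δ := by simp [hδ]; linarith
      have hNK : N - K = N / 2 + δ := by rw [hδ]; ring
      have hrhs : (4 * N / B) ^ (N / 2) * B ^ (N - K) = (4 * N) ^ (N / 2) * B ^ δ := by
        have hb2 : B ^ (N / 2) ≠ 0 := (Real.rpow_pos_of_pos hBpos (N / 2)).ne'
        rw [Real.div_rpow (by positivity) hBpos.le, hNK, Real.rpow_add hBpos]
        field_simp
      rw [hrhs, hNK, Real.rpow_add hKpos]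
      have e1 : (3:ℝ) ^ K ≤ 3 ^ (N / 2) :=
        Real.rpow_le_rpow_of_exponent_le (by norm_num) hk2
      have e2 : K ^ (N / 2) ≤ (N / 2) ^ (N / 2) :=
        Real.rpow_le_rpow hKnn hk2 (by positivity)
      have e3 : K ^ δ ≤ B ^ δ := Real.rpow_le_rpow hKnn hKB hδnn
      calc (3:ℝ) ^ K * (K ^ (N / 2) * K ^ δ)
          ≤ 3 ^ (N / 2) * ((N / 2) ^ (N / 2) * B ^ δ) := by
            refine mul_le_mul e1 (mul_le_mul e2 e3 (by positivity) (by positivity))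
              (by positivity) (by positivity)
        _ = (3 * (N / 2)) ^ (N / 2) * B ^ δ := by
            rw [Real.mul_rpow (by norm_num) (by positivity)]; ring
        _ ≤ (4 * N) ^ (N / 2) * B ^ δ := by
            refine mul_le_mul_of_nonneg_right
              (Real.rpow_le_rpow (by positivity) (by linarith) (by positivity)) ?_
            positivity
    calc B ^ k * 3 ^ k * K ^ (n - k) = (3 ^ k * K ^ (n - k)) * B ^ k := by ring
      _ ≤ ((4 * N / B) ^ (N / 2) * B ^ (n - k)) * B ^ k :=
          mul_le_mul_of_nonneg_right key (by positivity)
      _ = (4 * N / B) ^ (N / 2) * B ^ n := by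
          rw [mul_assoc, ← pow_add]
          congr 2
          omega
end

section
/- Let n and b be positive integers with 2n ≤ b, and set p = 1 − n/b (a real number). Then the lower tail of the Binomial(n, p) distribution satisfies: the sum over all integers i with 0 ≤ i ≤ n/2 of (n choose i) · p^i · (1−p)^{n−i} is at most (4n/b)^{n/2}. -/
/-- Lower tail of the Binomial(n, p) distribution with `p = 1 - n/b`, `2n ≤ b`:
the probability that the number of successes is at most `n/2` is at most `(4n/b)^(n/2)`. -/
theorem stmt_1 (n b : ℕ) (hn : 0 < n) (hb : 0 < b) (hnb : 2 * n ≤ b) :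
    (∑ i ∈ Finset.range (n / 2 + 1),
        (n.choose i : ℝ) * (1 - (n : ℝ) / (b : ℝ)) ^ i *
          (1 - (1 - (n : ℝ) / (b : ℝ))) ^ (n - i))
      ≤ (4 * (n : ℝ) / (b : ℝ)) ^ ((n : ℝ) / 2) := by
  have hbR : (0:ℝ) < b := by exact_mod_cast hb
  set q : ℝ := (n : ℝ) / b with hq
  have hq0 : 0 < q := div_pos (by exact_mod_cast hn) hbR
  have hq1 : q ≤ 1 := by
    rw [hq, div_le_one hbR]
    exact_mod_cast le_trans (by omega) hnb
  have h1q : 0 ≤ 1 - q := by linarith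
  have key : ∀ i ∈ Finset.range (n/2+1),
      (n.choose i : ℝ) * (1 - q) ^ i * (1 - (1 - q)) ^ (n - i)
        ≤ (n.choose i : ℝ) * q ^ ((n:ℝ)/2) := by
    intro i hi
    simp only [Finset.mem_range] at hi
    have hin : i ≤ n := le_trans (by omega) (Nat.div_le_self n 2)
    have hrw : (1 - (1 - q)) = q := by ring
    rw [hrw]
    have h2 : q ^ (n - i) ≤ q ^ ((n:ℝ)/2) := by
      rw [← Real.rpow_natCast q (n - i)]
      apply Real.rpow_le_rpow_of_exponent_ge hq0 hq1
      have : ((n - i : ℕ) : ℝ) = (n : ℝ) - i := by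
        push_cast [Nat.cast_sub hin]; ring
      rw [this]
      have hi' : (i : ℝ) ≤ (n : ℝ) / 2 := by
        have : i ≤ n / 2 := by omega
        have h := Nat.lt_succ_of_le this
        have : (i : ℝ) ≤ ((n/2 : ℕ) : ℝ) := by exact_mod_cast ‹i ≤ n/2›
        refine this.trans ?_
        have := Nat.div_mul_le_self n 2
        have : ((n/2 : ℕ) : ℝ) * 2 ≤ (n : ℝ) := by exact_mod_cast this
        linarith
      linarith
    have h1 : (1 - q) ^ i ≤ 1 := pow_le_one₀ h1q (by linarith)
    calc (n.choose i : ℝ) * (1 - q) ^ i * q ^ (n - i)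
        ≤ (n.choose i : ℝ) * 1 * q ^ (n - i) := by
          apply mul_le_mul_of_nonneg_right _ (by positivity)
          exact mul_le_mul_of_nonneg_left h1 (by positivity)
      _ = (n.choose i : ℝ) * q ^ (n - i) := by ring
      _ ≤ (n.choose i : ℝ) * q ^ ((n:ℝ)/2) :=
          mul_le_mul_of_nonneg_left h2 (by positivity)
  have hsum : (∑ i ∈ Finset.range (n / 2 + 1),
      (n.choose i : ℝ) * (1 - q) ^ i * (1 - (1 - q)) ^ (n - i))
      ≤ (∑ i ∈ Finset.range (n / 2 + 1), (n.choose i : ℝ)) * q ^ ((n:ℝ)/2) := by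
    rw [Finset.sum_mul]
    exact Finset.sum_le_sum key
  have hbin : (∑ i ∈ Finset.range (n / 2 + 1), (n.choose i : ℝ)) ≤ 2 ^ n := by
    have hsub : Finset.range (n/2+1) ⊆ Finset.range (n+1) := by
      apply Finset.range_subset_range.mpr; omega
    have h1 : (∑ i ∈ Finset.range (n / 2 + 1), (n.choose i : ℝ))
        ≤ ∑ i ∈ Finset.range (n + 1), (n.choose i : ℝ) := by
      apply Finset.sum_le_sum_of_subset_of_nonneg hsub
      intro i _ _; positivity
    have h2 : (∑ i ∈ Finset.range (n + 1), (n.choose i : ℝ)) = 2 ^ n := by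
      exact_mod_cast congrArg (Nat.cast : ℕ → ℝ) (Nat.sum_range_choose n)
    linarith
  have hrhs : (4 * (n : ℝ) / (b : ℝ)) ^ ((n : ℝ) / 2)
      = 2 ^ n * q ^ ((n:ℝ)/2) := by
    have : (4 * (n : ℝ) / (b : ℝ)) = 4 * q := by rw [hq]; ring
    rw [this, Real.mul_rpow (by norm_num) hq0.le]
    congr 1
    rw [show (4:ℝ) = 2 ^ (2:ℝ) by
      rw [show (2:ℝ) = ((2:ℕ):ℝ) by norm_num, Real.rpow_natCast]; norm_num,
      ← Real.rpow_mul (by norm_num)]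
    rw [show (2:ℝ) * ((n:ℝ)/2) = (n:ℝ) by ring, Real.rpow_natCast]
  rw [hrhs]
  refine hsum.trans ?_
  exact mul_le_mul_of_nonneg_right hbin (by positivity)
end

section
/- There exists a constant C > 0 such that the following holds. For every real ε with 0 < ε < 1 and all integers N ≥ 2, b ≥ 2, n ≥ 1 satisfying (n : ℝ) ≤ (b : ℝ)^{1−ε}, there exist a positive integer K with K ≤ ⌈C · ε⁻¹ · (log N / log b)⌉ and functions g₁, g₂, …, g_K : Fin N → Fin b such that: for every nonempty subset V ⊆ Fin N with |V| ≤ n, there exist i ∈ {1,…,K} and j ∈ Fin b such that exactly one element x ∈ V satisfies g_i(x) = j. -/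
/-!
For a uniformly random `g : α → β` with `b = |β|`, a set `V` of size `m ≤ b ^ (1 - ε)` has no
singleton part with probability `b ^ (-Ω(ε m))`. Such a `g` takes at most `m / 2` values on `V`,
so it misses at least `b - m / 2` parts; comparing the expected number `C(b, r) (1 - r / b) ^ m`
of `r`-sets of missed parts with `C(b - m / 2, r)` bounds that probability. For `16 m ≤ b` take
`r = b - m / 2`, which just counts the maps of `V` into `m / 2` parts; for `m < b < 16 m` take
`r ≈ m / 20`, where `log (1 - x) ≥ -5x/3` on `[0, 3/5]` is the estimate that closes the gap.
A union bound over all nonempty `V`, using `∑ V, y ^ |V| = (1 + y) ^ N`, then shows that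
`K = O(ε⁻¹ log N / log b)` independent random maps work for all `V` at once.
-/

open Finset Real

theorem card_filter_exists_forall_mem_le {ι γ κ : Type*} [Fintype ι] [DecidableEq ι]
    [Fintype γ] [DecidableEq γ] (𝒱 : Finset κ) (A : κ → Finset γ) :
    #{G : ι → γ | ∃ V ∈ 𝒱, ∀ i, G i ∈ A V} ≤ ∑ V ∈ 𝒱, #(A V) ^ Fintype.card ι := by
  have hsub : ({G : ι → γ | ∃ V ∈ 𝒱, ∀ i, G i ∈ A V} : Finset _)
      ⊆ 𝒱.biUnion fun V => Fintype.piFinset fun _ => A V := by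
    intro G hG
    obtain ⟨V, hV, hGV⟩ := (mem_filter.1 hG).2
    exact mem_biUnion.2 ⟨V, hV, Fintype.mem_piFinset.2 hGV⟩
  refine (card_le_card hsub).trans (card_biUnion_le.trans_eq ?_)
  simp [Fintype.card_piFinset]

section Combinatorics

variable {α β : Type*} [DecidableEq β]

def NoSingletonFiber (V : Finset α) (g : α → β) : Prop :=
  ∀ j, #{x ∈ V | g x = j} ≠ 1

theorem NoSingletonFiber.two_mul_card_image_le {V : Finset α} {g : α → β}
    (h : NoSingletonFiber V g) : 2 * #(V.image g) ≤ #V := by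
  have fiber_two_le : ∀ j ∈ V.image g, 2 ≤ #{x ∈ V | g x = j} := by
    intro j hj
    obtain ⟨x, hx, rfl⟩ := mem_image.1 hj
    have : 0 < #{y ∈ V | g y = g x} := card_pos.2 ⟨x, mem_filter.2 ⟨hx, rfl⟩⟩
    have := h (g x)
    omega
  calc 2 * #(V.image g) = ∑ _j ∈ V.image g, 2 := by rw [sum_const, smul_eq_mul, mul_comm]
    _ ≤ ∑ j ∈ V.image g, #{x ∈ V | g x = j} := sum_le_sum fiber_two_le
    _ = #V := (card_eq_sum_card_fiberwise fun x hx => mem_image_of_mem g hx).symm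

variable [Fintype α] [DecidableEq α] [Fintype β]

instance (V : Finset α) (g : α → β) : Decidable (NoSingletonFiber V g) :=
  inferInstanceAs (Decidable (∀ _, _))

theorem card_filter_forall_mem (V : Finset α) (S : Finset β) :
    #{g : α → β | ∀ x ∈ V, g x ∈ S} = #S ^ #V * Fintype.card β ^ (Fintype.card α - #V) := by
  have : ({g : α → β | ∀ x ∈ V, g x ∈ S} : Finset _)
      = Fintype.piFinset fun x => if x ∈ V then S else univ := by
    ext g
    simp only [mem_filter, mem_univ, true_and, Fintype.mem_piFinset]
    exact ⟨fun h x => by split_ifs with hx <;> simp [h x, hx],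
      fun h x hx => by simpa [hx] using h x⟩
  rw [this, Fintype.card_piFinset, ← card_compl]
  simp [apply_ite card, prod_ite, filter_not, compl_eq_univ_sdiff]

theorem card_noSingletonFiber_mul_choose_le (V : Finset α) (r : ℕ) :
    #{g : α → β | NoSingletonFiber V g} * (Fintype.card β - #V / 2).choose r
      ≤ (Fintype.card β).choose r *
          ((Fintype.card β - r) ^ #V * Fintype.card β ^ (Fintype.card α - #V)) := by
  have key := card_mul_le_card_mul (fun g T => Disjoint (V.image g) T)
    (s := {g : α → β | NoSingletonFiber V g}) (t := powersetCard r univ)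
    (m := (Fintype.card β - #V / 2).choose r)
    (n := (Fintype.card β - r) ^ #V * Fintype.card β ^ (Fintype.card α - #V)) ?_ ?_
  · rwa [card_powersetCard, card_univ] at key
  · intro g hg
    have hsmall := (mem_filter.1 hg).2.two_mul_card_image_le
    have : bipartiteAbove (fun g T => Disjoint (V.image g) T) (powersetCard r univ) g
        = powersetCard r (V.image g)ᶜ := by
      ext T
      simp [bipartiteAbove, mem_powersetCard, subset_compl_iff_disjoint_left, and_comm]
    rw [this, card_powersetCard, card_compl]
    exact Nat.choose_le_choose r (by omega)
  · intro T hT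
    calc #(bipartiteBelow (fun g T => Disjoint (V.image g) T) _ T)
        ≤ #{g : α → β | ∀ x ∈ V, g x ∈ Tᶜ} := by
          refine card_le_card fun g hg => ?_
          simp only [bipartiteBelow, mem_filter, mem_univ, true_and] at hg ⊢
          exact fun x hx => mem_compl.2 fun hxT => disjoint_left.1 hg.2 (mem_image_of_mem g hx) hxT
      _ = _ := by rw [card_filter_forall_mem, card_compl, (mem_powersetCard.1 hT).2]

theorem sum_pow_card_nonempty_lt_one {y : ℝ} (hy : 0 ≤ y) (h : Fintype.card α * y < log 2) :
    ∑ V ∈ (univ : Finset (Finset α)).erase ∅, y ^ #V < 1 := by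
  have htotal : ∑ V : Finset α, y ^ #V = (y + 1) ^ Fintype.card α := by
    simpa [powerset_univ] using sum_pow_mul_eq_add_pow y 1 (univ : Finset α)
  have hexp : (y + 1) ^ Fintype.card α < 2 := calc
    (y + 1) ^ Fintype.card α ≤ exp y ^ Fintype.card α :=
      pow_le_pow_left₀ (by linarith) (add_one_le_exp y) _
    _ = exp (Fintype.card α * y) := (exp_nat_mul y _).symm
    _ < 2 := (lt_log_iff_exp_lt two_pos).1 h
  rw [← add_sum_erase _ _ (mem_univ ∅), card_empty, pow_zero] at htotal
  linarith

theorem exists_forall_not_noSingletonFiber [Nonempty β] {ι : Type*} [Fintype ι] [DecidableEq ι]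
    (n : ℕ) {δ : ℝ}
    (hbad : ∀ V : Finset α, V.Nonempty → #V ≤ n →
      (#{g : α → β | NoSingletonFiber V g} : ℝ)
        ≤ exp (-δ * #V) * Fintype.card β ^ Fintype.card α)
    (hK : Fintype.card α * exp (-δ * Fintype.card ι) < log 2) :
    ∃ G : ι → α → β, ∀ V : Finset α, V.Nonempty → #V ≤ n → ∃ i, ¬ NoSingletonFiber V (G i) := by
  set K := Fintype.card ι
  set T : ℝ := Fintype.card β ^ Fintype.card α
  set 𝒱 : Finset (Finset α) := {V | V.Nonempty ∧ #V ≤ n}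
  set Bad : Finset (ι → α → β) :=
    {G | ∃ V ∈ 𝒱, ∀ i, G i ∈ ({g | NoSingletonFiber V g} : Finset (α → β))}
  have hterm : ∀ V ∈ 𝒱, (#{g : α → β | NoSingletonFiber V g} : ℝ) ^ K
      ≤ exp (-δ * K) ^ #V * T ^ K := by
    intro V hV
    obtain ⟨hne, hn⟩ := (mem_filter.1 hV).2
    calc (#{g : α → β | NoSingletonFiber V g} : ℝ) ^ K ≤ (exp (-δ * #V) * T) ^ K := by
          gcongr; exact hbad V hne hn
      _ = exp (-δ * K) ^ #V * T ^ K := by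
          rw [mul_pow, ← exp_nat_mul, ← exp_nat_mul]
          ring_nf
  have h𝒱 : 𝒱 ⊆ univ.erase ∅ := fun V hV =>
    mem_erase.2 ⟨(mem_filter.1 hV).2.1.ne_empty, mem_univ V⟩
  have hlt : (#Bad : ℝ) < T ^ K := calc
    (#Bad : ℝ) ≤ ∑ V ∈ 𝒱, (#{g : α → β | NoSingletonFiber V g} : ℝ) ^ K := by
        exact_mod_cast card_filter_exists_forall_mem_le 𝒱 _
    _ ≤ ∑ V ∈ 𝒱, exp (-δ * K) ^ #V * T ^ K := sum_le_sum hterm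
    _ ≤ (∑ V ∈ (univ : Finset (Finset α)).erase ∅, exp (-δ * K) ^ #V) * T ^ K := by
        rw [sum_mul]
        exact sum_le_sum_of_subset_of_nonneg h𝒱 fun _ _ _ => by positivity
    _ < T ^ K := mul_lt_of_lt_one_left (pow_pos (pow_pos (Nat.cast_pos.2 Fintype.card_pos) _) _)
        (sum_pow_card_nonempty_lt_one (exp_nonneg _) hK)
  have hlt' : #Bad < #(univ : Finset (ι → α → β)) := by
    rw [card_univ, Fintype.card_fun, Fintype.card_fun]
    exact Nat.cast_lt (α := ℝ) |>.1 (by push_cast; exact hlt)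
  obtain ⟨G, -, hG⟩ := exists_mem_notMem_of_card_lt_card hlt'
  refine ⟨G, fun V hne hn => ?_⟩
  by_contra! hall
  exact hG (mem_filter.2 ⟨mem_univ G, V, mem_filter.2 ⟨mem_univ V, hne, hn⟩,
    fun i => by simpa using hall i⟩)

end Combinatorics

theorem choose_mul_pow_le (b : ℕ) {s m : ℕ} (hsb : s ≤ b) (hsm : 2 * s ≤ m) :
    (b.choose s : ℝ) * s ^ m ≤ (exp 1 * s) ^ s * b ^ (m - s) := by
  have hchoose : (b.choose s : ℝ) * s.factorial ≤ b ^ s := by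
    rw [← Nat.cast_mul, mul_comm, ← Nat.descFactorial_eq_factorial_mul_choose]
    exact_mod_cast Nat.descFactorial_le_pow b s
  have hfact : (s : ℝ) ^ s ≤ exp s * s.factorial :=
    (div_le_iff₀ (by positivity)).1 (pow_div_factorial_le_exp _ s.cast_nonneg s)
  have htail : (s : ℝ) ^ (m - s) ≤ s ^ s * b ^ (m - 2 * s) := by
    rw [show m - s = s + (m - 2 * s) by omega, pow_add]
    gcongr
  calc (b.choose s : ℝ) * s ^ m = b.choose s * s ^ s * s ^ (m - s) := by
        rw [mul_assoc, ← pow_add, Nat.add_sub_cancel' (by omega)]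
    _ ≤ b.choose s * (exp s * s.factorial) * (s ^ s * b ^ (m - 2 * s)) := by gcongr
    _ = (b.choose s * s.factorial) * (exp s * s ^ s * b ^ (m - 2 * s)) := by ring
    _ ≤ b ^ s * (exp s * s ^ s * b ^ (m - 2 * s)) := by gcongr
    _ = (exp 1 * s) ^ s * b ^ (m - s) := by
        rw [mul_pow, ← exp_nat_mul, mul_one, show m - s = s + (m - 2 * s) by omega, pow_add]
        ring

theorem exp_neg_five_thirds_mul_le_one_sub {x : ℝ} (h0 : 0 ≤ x) (h1 : x ≤ 3 / 5) :
    exp (-(5 / 3 * x)) ≤ 1 - x := by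
  have hconv := convexOn_exp.2 (Set.mem_univ (-1)) (Set.mem_univ 0)
    (by linarith : 0 ≤ 5 / 3 * x) (by linarith : 0 ≤ 1 - 5 / 3 * x) (by ring)
  have he : exp (-1) ≤ 2 / 5 := by
    rw [exp_neg, inv_le_comm₀ (exp_pos 1) (by norm_num)]
    linarith [exp_one_gt_d9]
  simp only [smul_eq_mul, mul_zero, add_zero, exp_zero, mul_one, mul_neg] at hconv
  nlinarith

theorem pow_mul_sub_pow_le {b s r m : ℕ} (hm : 1 ≤ m) (hmr : m ≤ 20 * r)
    (hsr : 20 * (s + r) ≤ 11 * m + 20) (hmb : m ≤ b) (hb : b ≤ 16 * m) :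
    (b : ℝ) ^ r * (b - r) ^ m ≤ exp (-(m / 3840)) * (b - s + 1 - r) ^ r * b ^ m := by
  have hbpos : (0 : ℝ) < b := by exact_mod_cast (show 0 < b by omega)
  have hsrR : 20 * ((s : ℝ) + r - 1) ≤ 11 * m := by
    have : (20 * (s + r) : ℝ) ≤ 11 * m + 20 := by exact_mod_cast hsr
    linarith
  have hmrR : (m : ℝ) ≤ 20 * r := by exact_mod_cast hmr
  have hr1 : (1 : ℝ) ≤ r := by exact_mod_cast (show 1 ≤ r by omega)
  have hrb : (r : ℝ) ≤ b := by exact_mod_cast (show r ≤ b by omega)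
  have hmbR : (m : ℝ) ≤ b := by exact_mod_cast hmb
  have hbR : (b : ℝ) ≤ 16 * m := by exact_mod_cast hb
  set x := ((s : ℝ) + r - 1) / b
  have hx0 : 0 ≤ x := div_nonneg (by linarith [s.cast_nonneg (α := ℝ)]) hbpos.le
  have hx1 : x ≤ 3 / 5 := (div_le_iff₀ hbpos).2 (by linarith)
  have hc : b * exp (-(5 / 3 * x)) ≤ b - s + 1 - r := calc
    b * exp (-(5 / 3 * x)) ≤ b * (1 - x) := by
      gcongr; exact exp_neg_five_thirds_mul_le_one_sub hx0 hx1
    _ = b - s + 1 - r := by simp only [x]; field_simp; ring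
  have hbr : (b : ℝ) - r ≤ b * exp (-(r / b)) := calc
    (b : ℝ) - r = b * (1 - r / b) := by field_simp
    _ ≤ b * exp (-(r / b)) := by gcongr; exact one_sub_le_exp_neg _
  have hexponent : r * (5 / 3 * x) + m * (-(r / b)) ≤ -(m / 3840) := by
    have hrA := mul_le_mul_of_nonneg_left (show 5 / 3 * ((s : ℝ) + r - 1) - m ≤ -(m / 12) by
      linarith) (by linarith : (0 : ℝ) ≤ r)
    rw [show r * (5 / 3 * x) + m * (-(r / b)) = r * (5 / 3 * ((s : ℝ) + r - 1) - m) / b by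
      simp only [x]; field_simp; ring, div_le_iff₀ hbpos]
    nlinarith
  calc (b : ℝ) ^ r * (b - r) ^ m
      = (b * exp (-(5 / 3 * x))) ^ r * exp (r * (5 / 3 * x)) * (b - r) ^ m := by
        rw [mul_pow, mul_assoc _ (exp _ ^ r), ← exp_nat_mul, ← exp_add]
        simp
    _ ≤ (b * exp (-(5 / 3 * x))) ^ r * exp (r * (5 / 3 * x)) * (b * exp (-(r / b))) ^ m := by
        gcongr
    _ ≤ (b - s + 1 - r) ^ r * exp (r * (5 / 3 * x)) * (b * exp (-(r / b))) ^ m := by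
        gcongr
    _ = exp (r * (5 / 3 * x) + m * (-(r / b))) * (b - s + 1 - r) ^ r * b ^ m := by
        rw [mul_pow, ← exp_nat_mul, exp_add]; ring
    _ ≤ _ := by
        gcongr
        exact pow_nonneg (by linarith) _

theorem choose_mul_sub_pow_le {m b : ℕ} (hm : 1 ≤ m) (hmb : m ≤ b) (hb : b ≤ 16 * m) :
    (b.choose ((m + 19) / 20) : ℝ) * ((b - (m + 19) / 20 : ℕ) : ℝ) ^ m
      ≤ exp (-(m / 3840)) * (b - m / 2).choose ((m + 19) / 20) * b ^ m := by
  set r := (m + 19) / 20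
  set s := m / 2
  have hlow : ((b - s + 1 - r : ℕ) : ℝ) ^ r ≤ (b - s).choose r * r.factorial :=
    (div_le_iff₀ (by positivity)).1 (Nat.pow_le_choose r (b - s))
  have hup : (b.choose r : ℝ) * r.factorial ≤ b ^ r :=
    (le_div_iff₀ (by positivity)).1 (Nat.choose_le_pow_div r b)
  have hmain := pow_mul_sub_pow_le (s := s) hm (show m ≤ 20 * r by omega) (by omega) hmb hb
  rw [← Nat.cast_sub (by omega), show (b : ℝ) - s + 1 - r = ((b - s + 1 - r : ℕ) : ℝ) by
    push_cast [Nat.cast_sub (show r ≤ b - s + 1 by omega), Nat.cast_sub (show s ≤ b by omega)]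
    ring] at hmain
  refine le_of_mul_le_mul_right ?_ (show (0 : ℝ) < r.factorial by positivity)
  calc (b.choose r : ℝ) * ((b - r : ℕ) : ℝ) ^ m * r.factorial
      = (b.choose r * r.factorial) * ((b - r : ℕ) : ℝ) ^ m := by ring
    _ ≤ b ^ r * ((b - r : ℕ) : ℝ) ^ m := by gcongr
    _ ≤ exp (-(m / 3840)) * ((b - s + 1 - r : ℕ) : ℝ) ^ r * b ^ m := hmain
    _ ≤ exp (-(m / 3840)) * ((b - s).choose r * r.factorial) * b ^ m := by gcongr
    _ = _ := by ring

section Estimates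

variable {α β : Type*} [Fintype α] [DecidableEq α] [Fintype β] [DecidableEq β]

theorem card_noSingletonFiber_le_of_sixteen_mul_le {V : Finset α} {ε : ℝ} (hε : 0 ≤ ε)
    (hV : 2 ≤ #V) (h16 : 16 * #V ≤ Fintype.card β)
    (hVb : (#V : ℝ) ≤ (Fintype.card β : ℝ) ^ (1 - ε)) :
    (#{g : α → β | NoSingletonFiber V g} : ℝ)
      ≤ exp (-(ε * log (Fintype.card β) / 6) * #V) * Fintype.card β ^ Fintype.card α := by
  set b := Fintype.card β
  set m := #V
  set s := m / 2
  have hcount : #{g : α → β | NoSingletonFiber V g}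
      ≤ b.choose s * (s ^ m * b ^ (Fintype.card α - m)) := by
    have := card_noSingletonFiber_mul_choose_le (β := β) V (b - s)
    rwa [Nat.choose_self, mul_one, Nat.choose_symm (by omega), Nat.sub_sub_self (by omega)] at this
  have hmpos : (0 : ℝ) < m := by exact_mod_cast (show 0 < m by omega)
  have hspos : (0 : ℝ) < s := by exact_mod_cast (show 0 < s by omega)
  have hbpos : (0 : ℝ) < b := by exact_mod_cast (show 0 < b by omega)
  have hlogs : log s ≤ log m - log 2 := by
    rw [← log_div hmpos.ne' two_ne_zero]
    exact log_le_log hspos (by rw [le_div_iff₀ two_pos]; exact_mod_cast (show s * 2 ≤ m by omega))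
  have hlogm : log m ≤ (1 - ε) * log b := by
    rw [← log_rpow hbpos]; exact log_le_log hmpos hVb
  have hlog16 : 4 * log 2 + log m ≤ log b := by
    rw [← log_rpow two_pos, ← log_mul (by norm_num) hmpos.ne']
    exact log_le_log (by positivity) (by norm_num; exact_mod_cast h16)
  have hexponent : s * (1 + log s) ≤ -(ε * log b / 6) * m + s * log b := by
    have hL : 0 ≤ ε * log b := mul_nonneg hε (log_nonneg (by exact_mod_cast (show 1 ≤ b by omega)))
    have h3s : (m : ℝ) ≤ 3 * s := by exact_mod_cast (show m ≤ 3 * s by omega)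
    have ht : 1 + log s - log b ≤ -(ε * log b / 2) := by linarith [log_two_gt_d9]
    nlinarith [mul_le_mul_of_nonneg_left ht hspos.le, mul_le_mul_of_nonneg_left h3s hL]
  have hsmall : (exp 1 * s) ^ s ≤ exp (-(ε * log b / 6) * m) * b ^ s := by
    have hes : (exp 1 * s) ^ s = exp (s * (1 + log s)) := by
      rw [exp_nat_mul, exp_add, exp_log hspos]
    have hbs : (b : ℝ) ^ s = exp (s * log b) := by rw [exp_nat_mul, exp_log hbpos]
    rw [hes, hbs, ← exp_add]
    exact exp_le_exp.2 hexponent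
  calc (#{g : α → β | NoSingletonFiber V g} : ℝ)
      ≤ b.choose s * s ^ m * b ^ (Fintype.card α - m) := by
        rw [mul_assoc]; exact_mod_cast hcount
    _ ≤ (exp 1 * s) ^ s * b ^ (m - s) * b ^ (Fintype.card α - m) := by
        gcongr ?_ * _
        exact choose_mul_pow_le b (by omega) (by omega)
    _ ≤ exp (-(ε * log b / 6) * m) * b ^ s * b ^ (m - s) * b ^ (Fintype.card α - m) := by
        gcongr
    _ = exp (-(ε * log b / 6) * m) * b ^ Fintype.card α := by
        rw [mul_assoc _ (_ ^ s), ← pow_add, mul_assoc, ← pow_add]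
        congr 2
        have := card_le_univ V
        omega

theorem card_noSingletonFiber_le_of_le_sixteen_mul {V : Finset α} (hV : 1 ≤ #V)
    (hVb : #V ≤ Fintype.card β) (h16 : Fintype.card β ≤ 16 * #V) :
    (#{g : α → β | NoSingletonFiber V g} : ℝ)
      ≤ exp (-(#V / 3840)) * Fintype.card β ^ Fintype.card α := by
  set b := Fintype.card β
  set m := #V
  set r := (m + 19) / 20
  have hcount := card_noSingletonFiber_mul_choose_le (β := β) V r
  have hpos : (0 : ℝ) < (b - m / 2).choose r := by exact_mod_cast Nat.choose_pos (by omega)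
  have hbN : (b : ℝ) ^ m * b ^ (Fintype.card α - m) = b ^ Fintype.card α := by
    rw [← pow_add, Nat.add_sub_cancel' (card_le_univ V)]
  refine le_of_mul_le_mul_right ?_ hpos
  calc (#{g : α → β | NoSingletonFiber V g} : ℝ) * (b - m / 2).choose r
      ≤ b.choose r * ((b - r : ℕ) : ℝ) ^ m * b ^ (Fintype.card α - m) := by
        rw [mul_assoc]; exact_mod_cast hcount
    _ ≤ exp (-(m / 3840)) * (b - m / 2).choose r * b ^ m * b ^ (Fintype.card α - m) := by
        gcongr ?_ * _
        exact choose_mul_sub_pow_le hV hVb h16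
    _ = _ := by rw [mul_assoc _ (_ ^ m), hbN]; ring

theorem card_noSingletonFiber_le {V : Finset α} {ε : ℝ} (hε : 0 < ε)
    (hb : 2 ≤ Fintype.card β) (hV : V.Nonempty)
    (hVb : (#V : ℝ) ≤ (Fintype.card β : ℝ) ^ (1 - ε)) :
    (#{g : α → β | NoSingletonFiber V g} : ℝ)
      ≤ exp (-(ε * log (Fintype.card β) / 16000) * #V) * Fintype.card β ^ Fintype.card α := by
  set b := Fintype.card β
  set m := #V
  have hbR : (1 : ℝ) < b := by exact_mod_cast (show 1 < b by omega)
  obtain hm1 | hm2 : m = 1 ∨ 2 ≤ m := by have := hV.card_pos; omega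
  · obtain ⟨x, rfl⟩ := card_eq_one.1 hm1
    have : ({g : α → β | NoSingletonFiber {x} g} : Finset _) = ∅ :=
      filter_false_of_mem fun g _ hg => hg (g x) (by simp [filter_singleton])
    rw [this, card_empty, Nat.cast_zero]
    positivity
  have hmb : (m : ℝ) < b := hVb.trans_lt <| by
    simpa using rpow_lt_rpow_of_exponent_lt hbR (show 1 - ε < 1 by linarith)
  rcases le_total (16 * m) b with h16 | h16
  · refine (card_noSingletonFiber_le_of_sixteen_mul_le hε.le hm2 h16 hVb).trans ?_
    gcongr
    linarith
  · refine (card_noSingletonFiber_le_of_le_sixteen_mul (by omega)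
      (by exact_mod_cast hmb.le) h16).trans ?_
    have hmpos : (0 : ℝ) < m := by exact_mod_cast hV.card_pos
    have hεL : ε * log b ≤ 4 * log 2 := by
      have h1 : log m ≤ (1 - ε) * log b := by
        rw [← log_rpow (by linarith)]; exact log_le_log hmpos hVb
      have h2 : log b ≤ 4 * log 2 + log m := by
        rw [← log_rpow two_pos, ← log_mul (by norm_num) hmpos.ne']
        exact log_le_log (by linarith) (by norm_num; exact_mod_cast h16)
      linarith
    gcongr
    nlinarith [log_two_lt_d9]

end Estimates

theorem natCast_mul_exp_neg_lt_log_two {N : ℕ} (hN : 2 ≤ N) {t : ℝ} (ht : 2 * log N ≤ t) :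
    N * exp (-t) < log 2 := by
  have hNR : (2 : ℝ) ≤ N := by exact_mod_cast hN
  calc N * exp (-t) ≤ N * exp (-(2 * log N)) := by gcongr
    _ = 1 / N := by
        rw [exp_neg, ← Nat.cast_ofNat, ← log_pow, exp_log (by positivity)]
        field_simp
    _ < log 2 := by
        rw [div_lt_iff₀ (by linarith)]
        nlinarith [log_two_gt_d9]

/-- Existence of good partitions: there is a universal constant `C > 0` such that
for every `0 < ε < 1` and integers `N ≥ 2`, `b ≥ 2`, `n ≥ 1` with `n ≤ b^(1-ε)`,
there exist `K ≤ ⌈C · ε⁻¹ · (log N / log b)⌉` partitions of `Fin N` into `b` parts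
(encoded by functions `g i : Fin N → Fin b`) such that every nonempty subset
`V ⊆ Fin N` of size at most `n` has exactly one element in some part of some partition. -/
theorem stmt_3 :
    ∃ C : ℝ, 0 < C ∧
      ∀ (ε : ℝ), 0 < ε → ε < 1 →
        ∀ (N b n : ℕ), 2 ≤ N → 2 ≤ b → 1 ≤ n →
          (n : ℝ) ≤ (b : ℝ) ^ (1 - ε) →
          ∃ (K : ℕ), 0 < K ∧
            (K : ℤ) ≤ ⌈C * ε⁻¹ * (Real.log N / Real.log b)⌉ ∧
            ∃ g : Fin K → (Fin N → Fin b),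
              ∀ V : Finset (Fin N), V.Nonempty → V.card ≤ n →
                ∃ (i : Fin K) (j : Fin b),
                  (V.filter (fun x => g i x = j)).card = 1 := by
  refine ⟨32000, by norm_num, fun ε hε _ N b n hN hb _ hnb => ?_⟩
  have hlogN : 0 < log N := log_pos (by exact_mod_cast hN)
  have hlogb : 0 < log b := log_pos (by exact_mod_cast hb)
  set x := 32000 * ε⁻¹ * (log N / log b)
  have hx : 0 < x := by positivity
  refine ⟨⌈x⌉₊, Nat.ceil_pos.2 hx, (Int.natCast_ceil_eq_ceil hx.le).le, ?_⟩
  have : NeZero b := ⟨by omega⟩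
  have hK : 2 * log N ≤ ε * log b / 16000 * ⌈x⌉₊ := calc
    2 * log N = ε * log b / 16000 * x := by simp only [x]; field_simp; ring
    _ ≤ _ := by gcongr; exact Nat.le_ceil x
  obtain ⟨g, hg⟩ := exists_forall_not_noSingletonFiber (α := Fin N) (β := Fin b) (ι := Fin ⌈x⌉₊) n
    (δ := ε * log b / 16000) (fun V hV hVn => by
      simpa using card_noSingletonFiber_le (α := Fin N) (β := Fin b) hε (by simpa using hb) hV
        ((Nat.cast_le.2 hVn).trans (by simpa using hnb)))
    (by simpa using natCast_mul_exp_neg_lt_log_two hN hK)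
  refine ⟨g, fun V hV hVn => ?_⟩
  simpa [NoSingletonFiber] using hg V hV hVn
end

section
/- Let N, t, k be natural numbers and let a : Fin N → (Fin t → Option Bool) be a family of action sequences such that for every j ∈ Fin N the support of a j has at most k elements. Then there exists b : Fin t → Bool such that 2^k times the number of indices j ∈ Fin N for which b matches a j is at least N. -/
lemma aux_card_match (t : ℕ) (S : Finset (Fin t)) (c : Fin t → Bool) :
    (Finset.univ.filter (fun b : Fin t → Bool => ∀ i ∈ S, b i = c i)).card
      = 2 ^ (t - S.card) := by
  rw [← Fintype.card_subtype]
  have e : {b : Fin t → Bool // ∀ i ∈ S, b i = c i} ≃ (↥(Sᶜ) → Bool) :=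
    { toFun := fun b i => b.1 i
      invFun := fun g =>
        ⟨fun i => if h : i ∈ S then c i else g ⟨i, Finset.mem_compl.mpr h⟩,
         fun i hi => dif_pos hi⟩
      left_inv := fun ⟨b, hb⟩ => by
        ext i; dsimp; split_ifs with h
        · exact (hb i h).symm
        · rfl
      right_inv := fun g => by
        ext ⟨i, hi⟩; dsimp; rw [dif_neg (Finset.mem_compl.mp hi)] }
  rw [Fintype.card_congr e]
  simp [Finset.card_compl]

lemma key_pow (t k c : ℕ) (hc : c ≤ k) : 2 ^ t ≤ 2 ^ (k + (t - c)) :=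
  Nat.pow_le_pow_right (by norm_num) (by omega)

/-- If each of `N` action sequences of length `t` has support of size at most `k`,
then there is a sequence `b : Fin t → Bool` matching at least `N / 2^k` of them. -/
theorem stmt_4 (N t k : ℕ) (a : Fin N → (Fin t → Option Bool))
    (hk : ∀ j : Fin N, (Finset.univ.filter (fun i : Fin t => a j i ≠ none)).card ≤ k) :
    ∃ b : Fin t → Bool,
      N ≤ 2 ^ k *
        (Finset.univ.filter (fun j : Fin N =>
          ∀ i : Fin t, a j i = none ∨ a j i = some (b i))).card := by
  classical
  set cnt : (Fin t → Bool) → ℕ := fun b =>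
    (Finset.univ.filter (fun j : Fin N =>
      ∀ i : Fin t, a j i = none ∨ a j i = some (b i))).card with hcnt
  -- double counting
  have hsum : 2 ^ t * N ≤ ∑ b : Fin t → Bool, 2 ^ k * cnt b := by
    have swap : ∑ b : Fin t → Bool, cnt b
        = ∑ j : Fin N, (Finset.univ.filter (fun b : Fin t → Bool =>
            ∀ i : Fin t, a j i = none ∨ a j i = some (b i))).card := by
      simp only [hcnt, Finset.card_filter]
      rw [Finset.sum_comm]
    have hcard : ∀ j : Fin N,
        2 ^ t ≤ 2 ^ k * (Finset.univ.filter (fun b : Fin t → Bool =>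
            ∀ i : Fin t, a j i = none ∨ a j i = some (b i))).card := by
      intro j
      set S : Finset (Fin t) := Finset.univ.filter (fun i : Fin t => a j i ≠ none) with hS
      have : (Finset.univ.filter (fun b : Fin t → Bool =>
            ∀ i : Fin t, a j i = none ∨ a j i = some (b i))).card
          = 2 ^ (t - S.card) := by
        rw [← aux_card_match t S (fun i => (a j i).getD false)]
        congr 1
        apply Finset.filter_congr
        intro b _
        constructor
        · intro h i hi
          rcases h i with h' | h'
          · exact absurd h' (by simpa [hS] using hi)
          · simp [h']
        · intro h i
          by_cases hi : a j i = none
          · exact Or.inl hi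
          · right
            have := h i (by simp [hS, hi])
            cases hx : a j i with
            | none => exact absurd hx hi
            | some x =>
                have hb : b i = x := by simpa [hx] using this
                rw [hb]
      rw [this]
      have hS' : S.card ≤ k := hk j
      have h2 : 2 ^ t ≤ 2 ^ (k + (t - S.card)) := key_pow t k S.card hS'
      rwa [pow_add] at h2
    calc 2 ^ t * N = ∑ _j : Fin N, 2 ^ t := by simp [mul_comm]
      _ ≤ ∑ j : Fin N, 2 ^ k * (Finset.univ.filter (fun b : Fin t → Bool =>
            ∀ i : Fin t, a j i = none ∨ a j i = some (b i))).card :=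
          Finset.sum_le_sum fun j _ => hcard j
      _ = 2 ^ k * ∑ b : Fin t → Bool, cnt b := by rw [swap, Finset.mul_sum]
      _ = ∑ b : Fin t → Bool, 2 ^ k * cnt b := by rw [Finset.mul_sum]
  have hne : (Finset.univ : Finset (Fin t → Bool)).Nonempty := Finset.univ_nonempty
  have := Finset.exists_le_of_sum_le hne (by
    calc ∑ _b : Fin t → Bool, N = 2 ^ t * N := by
          simp [Finset.card_univ, mul_comm]
      _ ≤ ∑ b : Fin t → Bool, 2 ^ k * cnt b := hsum)
  obtain ⟨b, _, hb⟩ := this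
  exact ⟨b, hb⟩
end

section
/- Let N, t, k be natural numbers and let a : Fin N → (Fin t → Option Bool) be a family of action sequences such that for every j ∈ Fin N the support of a j has at most k elements. Then there exists a subset V ⊆ Fin N with 2^k · |V| ≥ N such that for every position i ∈ Fin t and all j, j' ∈ V, if a j i ≠ none and a j' i ≠ none, then a j i = a j' i (i.e., at every position, all non-idle actions of devices in V coincide). -/
/-- If each of `N` action sequences of length `t` has support of size at most `k`,
then there is a subset `V` of size at least `N / 2^k` such that at every position,
all non-idle actions of devices in `V` coincide. -/
theorem stmt_5 (N t k : ℕ) (a : Fin N → (Fin t → Option Bool))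
    (hk : ∀ j : Fin N, (Finset.univ.filter (fun i : Fin t => a j i ≠ none)).card ≤ k) :
    ∃ V : Finset (Fin N),
      N ≤ 2 ^ k * V.card ∧
      ∀ i : Fin t, ∀ j ∈ V, ∀ j' ∈ V,
        a j i ≠ none → a j' i ≠ none → a j i = a j' i := by
  classical
  -- For a "template" g, the compatible devices:
  let V : (Fin t → Bool) → Finset (Fin N) :=
    fun g => Finset.univ.filter (fun j => ∀ i, a j i ≠ none → a j i = some (g i))
  -- For a device j, the compatible templates:
  let C : Fin N → Finset (Fin t → Bool) :=
    fun j => Finset.univ.filter (fun g => ∀ i, a j i ≠ none → a j i = some (g i))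
  have key : ∀ j : Fin N, 2 ^ t ≤ 2 ^ k * (C j).card := by
    intro j
    -- express C j as a piFinset
    let s : Fin t → Finset Bool := fun i => (a j i).elim Finset.univ (fun b => {b})
    have hC : C j = Fintype.piFinset s := by
      ext g
      simp only [C, Finset.mem_filter, Finset.mem_univ, true_and, Fintype.mem_piFinset]
      constructor
      · intro h i
        cases hji : a j i with
        | none => simp [s, hji]
        | some b =>
          have := h i (by simp [hji])
          rw [hji] at this
          simp [s, hji]
          exact (Option.some_injective _ this).symm
      · intro h i hi
        cases hji : a j i with
        | none => exact absurd hji hi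
        | some b =>
          have hgi := h i
          simp [s, hji] at hgi
          simp [hji, hgi]
    have hcard : (C j).card = ∏ i, (s i).card := by
      rw [hC, Fintype.card_piFinset]
    have hsplit := Finset.card_filter_add_card_filter_not
      (s := (Finset.univ : Finset (Fin t))) (p := fun i => a j i ≠ none)
    rw [Finset.card_univ, Fintype.card_fin] at hsplit
    have hprod : ∏ i, (s i).card =
        2 ^ (Finset.univ.filter (fun i : Fin t => ¬ a j i ≠ none)).card := by
      rw [← Finset.prod_filter_mul_prod_filter_not Finset.univ (fun i => ¬ a j i ≠ none)]
      have h1 : ∀ i ∈ Finset.univ.filter (fun i : Fin t => ¬ a j i ≠ none),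
          (s i).card = 2 := by
        intro i hi
        simp only [Finset.mem_filter, not_not] at hi
        simp [s, hi.2]
      have h2 : ∀ i ∈ Finset.univ.filter (fun i : Fin t => ¬ ¬ a j i ≠ none),
          (s i).card = 1 := by
        intro i hi
        simp only [Finset.mem_filter, not_not] at hi
        cases hji : a j i with
        | none => exact absurd hji hi.2
        | some b => simp [s, hji]
      rw [Finset.prod_congr rfl h1, Finset.prod_congr rfl h2]
      simp
    have hsj : (Finset.univ.filter (fun i : Fin t => a j i ≠ none)).card ≤ k := hk j
    calc 2 ^ t = 2 ^ ((Finset.univ.filter (fun i : Fin t => a j i ≠ none)).card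
          + (Finset.univ.filter (fun i : Fin t => ¬ a j i ≠ none)).card) := by rw [hsplit]
      _ = 2 ^ (Finset.univ.filter (fun i : Fin t => a j i ≠ none)).card
          * 2 ^ (Finset.univ.filter (fun i : Fin t => ¬ a j i ≠ none)).card := pow_add 2 _ _
      _ ≤ 2 ^ k * 2 ^ (Finset.univ.filter (fun i : Fin t => ¬ a j i ≠ none)).card :=
          Nat.mul_le_mul_right _ (Nat.pow_le_pow_right (by norm_num) hsj)
      _ = 2 ^ k * (C j).card := by rw [hcard, hprod]
  -- double counting
  have hswap : ∑ g : Fin t → Bool, (V g).card = ∑ j : Fin N, (C j).card := by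
    simp only [V, C, Finset.card_filter]
    rw [Finset.sum_comm]
  have hsum : ∑ g : Fin t → Bool, N ≤ ∑ g : Fin t → Bool, 2 ^ k * (V g).card := by
    have : (2 : ℕ) ^ t * N ≤ 2 ^ k * ∑ j : Fin N, (C j).card := by
      calc (2:ℕ) ^ t * N = ∑ j : Fin N, 2 ^ t := by simp [mul_comm]
        _ ≤ ∑ j : Fin N, 2 ^ k * (C j).card := Finset.sum_le_sum (fun j _ => key j)
        _ = 2 ^ k * ∑ j : Fin N, (C j).card := by rw [Finset.mul_sum]
    calc ∑ g : Fin t → Bool, N = 2 ^ t * N := by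
          simp [Finset.sum_const, Finset.card_univ, Fintype.card_fun]
      _ ≤ 2 ^ k * ∑ j : Fin N, (C j).card := this
      _ = 2 ^ k * ∑ g : Fin t → Bool, (V g).card := by rw [hswap]
      _ = ∑ g : Fin t → Bool, 2 ^ k * (V g).card := by rw [Finset.mul_sum]
  obtain ⟨g, -, hg⟩ := Finset.exists_le_of_sum_le (s := (Finset.univ : Finset (Fin t → Bool)))
    (Finset.univ_nonempty) hsum
  refine ⟨V g, hg, ?_⟩
  intro i j hj j' hj' hji hji'
  simp only [V, Finset.mem_filter] at hj hj'
  rw [hj.2 i hji, hj'.2 i hji']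
end

section
/- Let t and k be natural numbers with 1 ≤ k and 2k ≤ t. Then, as real numbers, Σ_{i=1}^{k} (t choose i) · 2^i ≤ (t choose k) · 2^{k+1} ≤ 2 · (2·e·t/k)^k, where e is the base of the natural logarithm. -/
/-- For `1 ≤ k` and `2k ≤ t`:
`∑_{i=1}^k (t choose i) · 2^i ≤ (t choose k) · 2^(k+1) ≤ 2 · (2et/k)^k` as reals. -/
theorem stmt_8 (t k : ℕ) (hk : 1 ≤ k) (hkt : 2 * k ≤ t) :
    (∑ i ∈ Finset.Icc 1 k, (t.choose i : ℝ) * 2 ^ i) ≤ (t.choose k : ℝ) * 2 ^ (k + 1) ∧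
    (t.choose k : ℝ) * 2 ^ (k + 1) ≤ 2 * (2 * Real.exp 1 * (t : ℝ) / (k : ℝ)) ^ k := by
  have mono : ∀ i, i ≤ k → t.choose i ≤ t.choose k := by
    intro i hi
    induction hi using Nat.decreasingInduction with
    | self => rfl
    | of_succ j hj ih =>
      exact (Nat.choose_le_succ_of_lt_half_left (by omega)).trans ih
  have kpos : (0 : ℝ) < k := by exact_mod_cast hk
  constructor
  · calc (∑ i ∈ Finset.Icc 1 k, (t.choose i : ℝ) * 2 ^ i)
        ≤ ∑ i ∈ Finset.Icc 1 k, (t.choose k : ℝ) * 2 ^ i := by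
          apply Finset.sum_le_sum
          intro i hi
          have := mono i (Finset.mem_Icc.mp hi).2
          have : (t.choose i : ℝ) ≤ t.choose k := by exact_mod_cast this
          have h2 : (0:ℝ) ≤ 2 ^ i := by positivity
          nlinarith
      _ = (t.choose k : ℝ) * ∑ i ∈ Finset.Icc 1 k, (2:ℝ) ^ i := by
          rw [Finset.mul_sum]
      _ ≤ (t.choose k : ℝ) * 2 ^ (k + 1) := by
          apply mul_le_mul_of_nonneg_left _ (by positivity)
          calc (∑ i ∈ Finset.Icc 1 k, (2:ℝ) ^ i)
              ≤ ∑ i ∈ Finset.range (k + 1), (2:ℝ) ^ i := by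
                apply Finset.sum_le_sum_of_subset_of_nonneg
                · intro i hi
                  simp only [Finset.mem_Icc] at hi
                  simp only [Finset.mem_range]; omega
                · intros; positivity
            _ = 2 ^ (k + 1) - 1 := by
                rw [geom_sum_eq (by norm_num)]; norm_num
            _ ≤ 2 ^ (k + 1) := by linarith
  · have h1 : (t.choose k : ℝ) ≤ (t : ℝ) ^ k / k.factorial :=
      Nat.choose_le_pow_div k t
    have h2 : (k : ℝ) ^ k / k.factorial ≤ Real.exp 1 ^ k := by
      have := Real.pow_div_factorial_le_exp (x := (k : ℝ)) (Nat.cast_nonneg k) k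
      calc (k : ℝ) ^ k / k.factorial ≤ Real.exp k := this
        _ = Real.exp 1 ^ k := by
            rw [← Real.exp_nat_mul]; norm_num
    have hfac : (0 : ℝ) < k.factorial := by exact_mod_cast k.factorial_pos
    have hchoose : (t.choose k : ℝ) ≤ (Real.exp 1 * t / k) ^ k := by
      calc (t.choose k : ℝ) ≤ (t : ℝ) ^ k / k.factorial := h1
        _ ≤ (Real.exp 1 * t / k) ^ k := by
            rw [div_pow, mul_pow, div_le_div_iff₀ hfac (by positivity)]
            rw [div_le_iff₀ hfac] at h2
            calc (t:ℝ)^k * (k:ℝ)^k ≤ (t:ℝ)^k * (Real.exp 1 ^ k * k.factorial) := by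
                  apply mul_le_mul_of_nonneg_left h2 (by positivity)
              _ = Real.exp 1 ^ k * (t:ℝ)^k * k.factorial := by ring
    calc (t.choose k : ℝ) * 2 ^ (k + 1)
        ≤ (Real.exp 1 * t / k) ^ k * 2 ^ (k + 1) := by
          apply mul_le_mul_of_nonneg_right hchoose (by positivity)
      _ = 2 * (2 * Real.exp 1 * (t : ℝ) / (k : ℝ)) ^ k := by
          rw [pow_succ]
          rw [show (2 * Real.exp 1 * (t:ℝ) / k) = 2 * (Real.exp 1 * t / k) by ring]
          rw [mul_pow]
          ring
end

section
/- Let N, t, k be natural numbers with 1 ≤ k and 2k ≤ t, and let a : Fin N → (Fin t → Option Bool) be an injective family of action sequences such that for every j ∈ Fin N the support of a j has at most k elements. Then, as real numbers, N − 1 ≤ 2 · (2·e·t/k)^k, where e is the base of the natural logarithm. In particular, t ≥ (k/(2e)) · ((N−1)/2)^{1/k}. -/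
/-!
An action sequence `s` is determined by its graph `{(i, b) | s i = some b} ⊆ Fin t × Bool`,
which has as many elements as the support of `s`. Hence `N ≤ ∑_{i ≤ k} C(2t, i)`, and the
standard estimate `∑_{i ≤ k} C(n, i) ≤ (e n / k)^k` gives `N ≤ (2 e t / k)^k`. The second
inequality is the `k`-th root of the first.
-/

open Finset

theorem card_filter_card_le_eq_sum_choose (α : Type*) [Fintype α] [DecidableEq α] (k : ℕ) :
    #{s : Finset α | #s ≤ k} = ∑ i ∈ range (k + 1), (Fintype.card α).choose i := by
  have hunion : ({s : Finset α | #s ≤ k} : Finset (Finset α))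
      = (range (k + 1)).biUnion fun i => powersetCard i univ := by
    ext s
    simp [mem_powersetCard]
  rw [hunion, card_biUnion]
  · simp [card_powersetCard]
  · intro i _ j _ hij
    refine disjoint_left.2 fun s hi hj => hij ?_
    rw [mem_powersetCard] at hi hj
    exact hi.2 ▸ hj.2

theorem sum_range_choose_mul_pow_le {n k : ℕ} (hkn : k ≤ n) {x : ℝ} (hx : 0 ≤ x) :
    ∑ i ∈ range (k + 1), (n.choose i : ℝ) * x ^ i ≤ (x + 1) ^ n := by
  rw [add_pow]
  calc ∑ i ∈ range (k + 1), (n.choose i : ℝ) * x ^ i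
      ≤ ∑ i ∈ range (n + 1), (n.choose i : ℝ) * x ^ i :=
        sum_le_sum_of_subset_of_nonneg (range_subset_range.2 (by omega))
          fun i _ _ => by positivity
    _ = ∑ i ∈ range (n + 1), x ^ i * 1 ^ (n - i) * n.choose i := by
        simp only [one_pow, mul_one, mul_comm]

-- Weight by `x = k / n`: `x^k ∑_{i ≤ k} C(n, i) ≤ (1 + x)^n ≤ exp (n x) = e^k`.
theorem sum_range_choose_le_exp_mul_div_pow {n k : ℕ} (hk : 0 < k) (hkn : k ≤ n) :
    (∑ i ∈ range (k + 1), n.choose i : ℝ) ≤ (Real.exp 1 * n / k) ^ k := by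
  have hn : (0 : ℝ) < n := by exact_mod_cast hk.trans_le hkn
  set x : ℝ := k / n with hx
  have hx0 : 0 < x := by positivity
  have hx1 : x ≤ 1 := div_le_one_of_le₀ (by exact_mod_cast hkn) hn.le
  have hweighted : x ^ k * ∑ i ∈ range (k + 1), (n.choose i : ℝ) ≤ Real.exp 1 ^ k :=
    calc x ^ k * ∑ i ∈ range (k + 1), (n.choose i : ℝ)
        ≤ ∑ i ∈ range (k + 1), (n.choose i : ℝ) * x ^ i := by
          rw [mul_sum]
          refine sum_le_sum fun i hi => ?_
          rw [mul_comm]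
          exact mul_le_mul_of_nonneg_left
            (pow_le_pow_of_le_one hx0.le hx1 (Nat.lt_succ_iff.1 (mem_range.1 hi))) (by positivity)
      _ ≤ (x + 1) ^ n := sum_range_choose_mul_pow_le hkn hx0.le
      _ ≤ Real.exp x ^ n := by gcongr; exact Real.add_one_le_exp x
      _ = Real.exp 1 ^ k := by
          rw [← Real.exp_nat_mul, ← Real.exp_nat_mul, hx]
          field_simp
  calc (∑ i ∈ range (k + 1), n.choose i : ℝ)
      ≤ Real.exp 1 ^ k / x ^ k := by
        rw [le_div_iff₀ (by positivity)]; linarith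
    _ = (Real.exp 1 * n / k) ^ k := by
        rw [← div_pow, hx]; field_simp

section OptionGraph

variable {ι β : Type*} [Fintype ι] [Fintype β] [DecidableEq β]

def optionGraph (f : ι → Option β) : Finset (ι × β) :=
  {p | f p.1 = some p.2}

@[simp]
theorem mem_optionGraph {f : ι → Option β} {i : ι} {b : β} :
    (i, b) ∈ optionGraph f ↔ f i = some b := by
  simp [optionGraph]

theorem optionGraph_injective : Function.Injective (optionGraph (ι := ι) (β := β)) :=
  fun f g h => funext fun i => Option.ext fun b => by
    rw [← mem_optionGraph, ← mem_optionGraph, h]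

theorem card_optionGraph (f : ι → Option β) :
    #(optionGraph f) = #{i | f i ≠ none} := by
  refine card_bij (fun p _ => p.1) ?_ ?_ ?_
  · rintro ⟨i, b⟩ hp
    simp_all
  · rintro ⟨i, b⟩ hp ⟨i', b'⟩ hp' (rfl : i = i')
    rw [mem_optionGraph] at hp hp'
    simpa [hp] using hp'
  · intro i hi
    obtain ⟨b, hb⟩ := Option.ne_none_iff_exists'.1 (mem_filter.1 hi).2
    exact ⟨(i, b), mem_optionGraph.2 hb, rfl⟩

theorem card_le_sum_choose_of_injective {κ : Type*} [Fintype κ] {k : ℕ}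
    (a : κ → ι → Option β) (ha : Function.Injective a)
    (hsupp : ∀ j, #{i | a j i ≠ none} ≤ k) :
    Fintype.card κ ≤ ∑ i ∈ range (k + 1), (Fintype.card ι * Fintype.card β).choose i := by
  classical
  rw [← Fintype.card_prod, ← card_filter_card_le_eq_sum_choose, ← card_univ]
  refine card_le_card_of_injOn (optionGraph ∘ a) (fun j _ => ?_)
    (optionGraph_injective.comp ha).injOn
  simpa [card_optionGraph] using hsupp j

end OptionGraph

-- Stated with `|y|` so that it also covers negative `y` (the case `N = 0` of the theorem).
theorem rpow_one_div_le_of_abs_le_pow {y b : ℝ} {k : ℕ} (hk : k ≠ 0) (hb : 0 ≤ b)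
    (hy : |y| ≤ b ^ k) : y ^ (1 / (k : ℝ)) ≤ b :=
  calc y ^ (1 / (k : ℝ)) ≤ |y| ^ (1 / (k : ℝ)) :=
        (le_abs_self _).trans (Real.abs_rpow_le_abs_rpow _ _)
    _ ≤ b := by
        rw [one_div, Real.rpow_inv_le_iff_of_pos (abs_nonneg y) hb (by positivity),
          Real.rpow_natCast]
        exact hy

/-- If `N` distinct action sequences of length `t` each have support of size at
most `k`, with `1 ≤ k` and `2k ≤ t`, then `N - 1 ≤ 2·(2et/k)^k`; in particular
`t ≥ (k/(2e)) · ((N-1)/2)^(1/k)`. -/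
theorem stmt_9 (N t k : ℕ) (hk : 1 ≤ k) (hkt : 2 * k ≤ t)
    (a : Fin N → (Fin t → Option Bool)) (ha : Function.Injective a)
    (hsupp : ∀ j : Fin N, (Finset.univ.filter (fun i : Fin t => a j i ≠ none)).card ≤ k) :
    (N : ℝ) - 1 ≤ 2 * (2 * Real.exp 1 * (t : ℝ) / (k : ℝ)) ^ k ∧
    (t : ℝ) ≥ ((k : ℝ) / (2 * Real.exp 1)) * (((N : ℝ) - 1) / 2) ^ ((1 : ℝ) / (k : ℝ)) := by
  have hcount : N ≤ ∑ i ∈ range (k + 1), (2 * t).choose i := by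
    simpa [mul_comm] using card_le_sum_choose_of_injective a ha hsupp
  have hkR : (0 : ℝ) < k := by exact_mod_cast hk
  have hN : (N : ℝ) ≤ (2 * Real.exp 1 * t / k) ^ k :=
    calc (N : ℝ) ≤ (∑ i ∈ range (k + 1), (2 * t).choose i : ℝ) := by exact_mod_cast hcount
      _ ≤ (Real.exp 1 * (2 * t : ℕ) / k) ^ k :=
        sum_range_choose_le_exp_mul_div_pow hk (by omega)
      _ = (2 * Real.exp 1 * t / k) ^ k := by push_cast; ring_nf
  have hbase : 1 ≤ 2 * Real.exp 1 * t / k := by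
    rw [le_div_iff₀ hkR]
    have : (2 * k : ℝ) ≤ t := by exact_mod_cast hkt
    nlinarith [Real.add_one_le_exp 1]
  have hpow : 1 ≤ (2 * Real.exp 1 * t / k) ^ k := one_le_pow₀ hbase
  refine ⟨by linarith, ?_⟩
  have hroot : (((N : ℝ) - 1) / 2) ^ ((1 : ℝ) / k) ≤ 2 * Real.exp 1 * t / k :=
    rpow_one_div_le_of_abs_le_pow (by omega) (by linarith) (abs_le.2 ⟨by linarith, by linarith⟩)
  calc (k / (2 * Real.exp 1)) * (((N : ℝ) - 1) / 2) ^ ((1 : ℝ) / k)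
      ≤ (k / (2 * Real.exp 1)) * (2 * Real.exp 1 * t / k) := by gcongr
    _ = t := by field_simp
end

section
/- Let t be a natural number, S a finite set, and f : S → Finset (Fin t) an assignment of a set of transmission times to each element of S. Suppose that for every nonempty subset A ⊆ S there exists a time i ∈ Fin t such that exactly one element j ∈ A satisfies i ∈ f j. Then |S| ≤ t. -/
/-- If each device `j` in a finite set `S` transmits at time slots `f j ⊆ Fin t`,
and every nonempty subset of `S` has a time slot where exactly one of its members
transmits, then `|S| ≤ t`. -/
theorem stmt_10 (t : ℕ) (S : Type*) [Fintype S] (f : S → Finset (Fin t))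
    (h : ∀ A : Finset S, A.Nonempty →
      ∃ i : Fin t, (A.filter (fun j => i ∈ f j)).card = 1) :
    Fintype.card S ≤ t := by
  classical
  set v : S → (Fin t → ZMod 2) := fun j i => if i ∈ f j then 1 else 0 with hv
  have hli : LinearIndependent (ZMod 2) v := by
    rw [Fintype.linearIndependent_iff]
    intro g hg j
    by_contra hj
    set A : Finset S := Finset.univ.filter (fun j => g j ≠ 0) with hA
    have hAne : A.Nonempty := ⟨j, by simp [hA, hj]⟩
    obtain ⟨i, hi⟩ := h A hAne
    have htwo : ∀ x : ZMod 2, x = 0 ∨ x = 1 := by decide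
    have this0 := congrFun hg i
    simp only [Finset.sum_apply, Pi.smul_apply, Pi.zero_apply, hv, smul_eq_mul] at this0
    have key : (∑ k : S, g k * (if i ∈ f k then (1 : ZMod 2) else 0))
        = ∑ k ∈ A.filter (fun k => i ∈ f k), (1 : ZMod 2) := by
      rw [Finset.sum_filter, hA, Finset.sum_filter]
      apply Finset.sum_congr rfl
      intro k _
      rcases htwo (g k) with h0 | h1 <;> by_cases hik : i ∈ f k <;>
        simp_all
    rw [key] at this0
    rw [Finset.sum_const, hi] at this0
    simp at this0
  have := hli.fintype_card_le_finrank
  simpa using this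
end

section
/- Let t and n be natural numbers, S a finite set, and f : S → Finset (Fin t) an assignment of a set of transmission times to each element of S. Suppose that for every subset A ⊆ S with |A| > n there exists a time i ∈ Fin t such that exactly one element j ∈ A satisfies i ∈ f j. Then |S| ≤ t + n. -/
/-- If each device `j` in a finite set `S` transmits at time slots `f j ⊆ Fin t`,
and every subset of `S` of size greater than `n` has a time slot where exactly one
of its members transmits, then `|S| ≤ t + n`. -/
theorem stmt_11 (t n : ℕ) (S : Type*) [Fintype S] (f : S → Finset (Fin t))
    (h : ∀ A : Finset S, n < A.card →
      ∃ i : Fin t, (A.filter (fun j => i ∈ f j)).card = 1) :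
    Fintype.card S ≤ t + n := by
  classical
  suffices H : ∀ k (A : Finset S) (T : Finset (Fin t)), A.card = k →
      (∀ i ∈ T, (A.filter (fun j => i ∈ f j)).card = 0) →
      A.card + T.card ≤ t + n by
    have := H (Finset.univ : Finset S).card Finset.univ ∅ rfl (by simp)
    simpa [Finset.card_univ] using this
  intro k
  induction k with
  | zero =>
    intro A T hA _
    have hT : T.card ≤ t := by
      simpa using Finset.card_le_univ T
    omega
  | succ m ih =>
    intro A T hA hT
    by_cases hn : n < A.card
    · obtain ⟨i, hi⟩ := h A hn
      obtain ⟨j, hj⟩ := Finset.card_eq_one.mp hi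
      have hjA : j ∈ A ∧ i ∈ f j := by
        have : j ∈ A.filter (fun j => i ∈ f j) := by rw [hj]; exact Finset.mem_singleton_self j
        simpa using this
      have hiT : i ∉ T := by
        intro hmem
        have := hT i hmem
        omega
      have hA' : (A.erase j).card = m := by
        rw [Finset.card_erase_of_mem hjA.1, hA]; omega
      have hcond : ∀ i' ∈ insert i T,
          ((A.erase j).filter (fun x => i' ∈ f x)).card = 0 := by
        intro i' hi'
        rw [Finset.card_eq_zero, Finset.filter_eq_empty_iff]
        intro x hx hfx
        rcases Finset.mem_insert.mp hi' with rfl | hi'T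
        · have : x ∈ A.filter (fun j => i' ∈ f j) :=
            Finset.mem_filter.mpr ⟨Finset.mem_of_mem_erase hx, hfx⟩
          rw [hj, Finset.mem_singleton] at this
          exact (Finset.ne_of_mem_erase hx) this
        · have h0 := hT i' hi'T
          rw [Finset.card_eq_zero, Finset.filter_eq_empty_iff] at h0
          exact h0 (Finset.mem_of_mem_erase hx) hfx
      have := ih (A.erase j) (insert i T) hA' hcond
      rw [Finset.card_insert_of_notMem hiT] at this
      omega
    · have hTc : T.card ≤ t := by simpa using Finset.card_le_univ T
      omega
end

section
/- Let t be a natural number, M a positive integer, W a finite set, and T : W → Finset (Fin t) such that T j is nonempty for every j ∈ W, and such that every i ∈ Fin t satisfies i ∈ T j for at most M elements j ∈ W. Then there exists a subset V ⊆ W with 4M · |V| ≥ |W| such that for every j ∈ V there exists i ∈ T j with i ∉ T j' for every j' ∈ V with j' ≠ j (i.e., every element of V owns a slot used by no other element of V). -/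
open Finset

/-- Greedy independent-set extraction: if in every nonempty subset there is a
vertex of degree at most `2M`, then every finset has an independent subset of
proportional size. -/
lemma aux_indep {W : Type*} [DecidableEq W] (M : ℕ)
    (edge : W → W → Prop) [DecidableRel edge]
    (hsymm : ∀ a b, edge a b → edge b a)
    (hmin : ∀ S : Finset W, S.Nonempty → ∃ j ∈ S, (S.filter (edge j)).card ≤ 2 * M) :
    ∀ S : Finset W, ∃ V ⊆ S, S.card ≤ (2 * M + 1) * V.card ∧
      ∀ a ∈ V, ∀ b ∈ V, a ≠ b → ¬ edge a b := by
  intro S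
  induction S using Finset.strongInduction with
  | _ S ih =>
    rcases S.eq_empty_or_nonempty with rfl | hS
    · exact ⟨∅, Subset.rfl, by simp, by simp⟩
    · obtain ⟨j, hj, hdeg⟩ := hmin S hS
      set D : Finset W := insert j (S.filter (edge j)) with hD
      have hDcard : D.card ≤ 2 * M + 1 := le_trans (card_insert_le _ _) (by omega)
      have hjD : j ∈ D := mem_insert_self _ _
      have hssub : S \ D ⊂ S := by
        rw [Finset.ssubset_iff_of_subset (sdiff_subset)]
        exact ⟨j, hj, by simp [hjD]⟩
      obtain ⟨V', hV'sub, hV'card, hV'indep⟩ := ih (S \ D) hssub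
      have hjV' : j ∉ V' := fun h => by
        have := hV'sub h; simp [hjD] at this
      refine ⟨insert j V', ?_, ?_, ?_⟩
      · intro x hx
        rcases mem_insert.mp hx with rfl | hx
        · exact hj
        · exact (sdiff_subset) (hV'sub hx)
      · have h1 : S.card ≤ (S \ D).card + D.card := by
          have h3 : S ∪ D = (S \ D) ∪ D := by
            ext x; simp [Finset.mem_union, Finset.mem_sdiff]
          calc S.card ≤ (S ∪ D).card := Finset.card_le_card Finset.subset_union_left
            _ = ((S \ D) ∪ D).card := by rw [h3]
            _ ≤ (S \ D).card + D.card := Finset.card_union_le _ _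
        rw [card_insert_of_notMem hjV']
        calc S.card ≤ (S \ D).card + D.card := h1
          _ ≤ (2 * M + 1) * V'.card + (2 * M + 1) := Nat.add_le_add hV'card hDcard
          _ = (2 * M + 1) * (V'.card + 1) := by ring
      · intro a ha b hb hab
        have hedgejb : ∀ b' ∈ V', ¬ edge j b' := by
          intro b' hb' he
          have hbS : b' ∈ S \ D := hV'sub hb'
          rw [Finset.mem_sdiff] at hbS
          exact hbS.2 (mem_insert_of_mem (mem_filter.mpr ⟨hbS.1, he⟩))
        rcases mem_insert.mp ha with rfl | haV
        · rcases mem_insert.mp hb with rfl | hbV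
          · exact absurd rfl hab
          · exact hedgejb b hbV
        · rcases mem_insert.mp hb with rfl | hbV
          · exact fun he => hedgejb a haV (hsymm _ _ he)
          · exact hV'indep a haV b hbV hab

/-- If each device `j` in a finite set `W` has a nonempty set `T j` of potential
active time slots, and every time slot is potentially active for at most `M`
devices, then there is a subset `V` of size at least `|W| / (4M)` in which every
device owns a slot used by no other device of `V`. -/
theorem stmt_12 (t : ℕ) (M : ℕ) (hM : 0 < M) (W : Type*) [Fintype W]
    (T : W → Finset (Fin t)) (hne : ∀ j : W, (T j).Nonempty)
    (hlight : ∀ i : Fin t, (Finset.univ.filter (fun j : W => i ∈ T j)).card ≤ M) :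
    ∃ V : Finset W,
      Fintype.card W ≤ 4 * M * V.card ∧
      ∀ j ∈ V, ∃ i ∈ T j, ∀ j' ∈ V, j' ≠ j → i ∉ T j' := by
  classical
  choose f hf using hne
  set edge : W → W → Prop := fun a b => a ≠ b ∧ (f a ∈ T b ∨ f b ∈ T a) with hedge
  have hsymm : ∀ a b, edge a b → edge b a := fun a b h => ⟨h.1.symm, h.2.symm⟩
  -- degree bound for "out-type" neighborhoods
  have hA : ∀ (a : W) (S : Finset W),
      (S.filter (fun b => f a ∈ T b ∧ a ≠ b)).card ≤ M - 1 := by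
    intro a S
    have h1 : S.filter (fun b => f a ∈ T b ∧ a ≠ b) ⊆
        (Finset.univ.filter (fun b : W => f a ∈ T b)).erase a := by
      intro b hb
      simp only [mem_filter, mem_erase, mem_univ, true_and] at hb ⊢
      exact ⟨(hb.2.2).symm, hb.2.1⟩
    have h2 : a ∈ Finset.univ.filter (fun b : W => f a ∈ T b) := by
      simp [hf a]
    calc (S.filter (fun b => f a ∈ T b ∧ a ≠ b)).card
        ≤ ((Finset.univ.filter (fun b : W => f a ∈ T b)).erase a).card :=
          Finset.card_le_card h1
      _ = (Finset.univ.filter (fun b : W => f a ∈ T b)).card - 1 :=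
          Finset.card_erase_of_mem h2
      _ ≤ M - 1 := Nat.sub_le_sub_right (hlight (f a)) 1
  -- minimum degree bound
  have hmin : ∀ S : Finset W, S.Nonempty →
      ∃ j ∈ S, (S.filter (edge j)).card ≤ 2 * M := by
    intro S hS
    by_contra hcon
    push_neg at hcon
    -- sum of "in-type" degrees is small
    have hsum : (∑ j ∈ S, (S.filter (fun b => f b ∈ T j ∧ b ≠ j)).card)
        ≤ (M - 1) * S.card := by
      have hrw : ∀ j ∈ S, (S.filter (fun b => f b ∈ T j ∧ b ≠ j)).card
          = ∑ b ∈ S, (if f b ∈ T j ∧ b ≠ j then 1 else 0) := by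
        intro j _; rw [Finset.card_filter]
      calc (∑ j ∈ S, (S.filter (fun b => f b ∈ T j ∧ b ≠ j)).card)
          = ∑ j ∈ S, ∑ b ∈ S, (if f b ∈ T j ∧ b ≠ j then 1 else 0) :=
            Finset.sum_congr rfl hrw
        _ = ∑ b ∈ S, ∑ j ∈ S, (if f b ∈ T j ∧ b ≠ j then 1 else 0) :=
            Finset.sum_comm
        _ = ∑ b ∈ S, (S.filter (fun j => f b ∈ T j ∧ b ≠ j)).card := by
            refine Finset.sum_congr rfl ?_
            intro b _; rw [Finset.card_filter]
        _ ≤ ∑ b ∈ S, (M - 1) := Finset.sum_le_sum (fun b _ => hA b S)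
        _ = (M - 1) * S.card := by rw [Finset.sum_const, smul_eq_mul, mul_comm]
    -- but each in-type degree is big
    have hbig : ∀ j ∈ S, M + 2 ≤ (S.filter (fun b => f b ∈ T j ∧ b ≠ j)).card := by
      intro j hjS
      have hdeg := hcon j hjS
      have hsub : S.filter (edge j) ⊆
          (S.filter (fun b => f j ∈ T b ∧ j ≠ b)) ∪
          (S.filter (fun b => f b ∈ T j ∧ b ≠ j)) := by
        intro b hb
        simp only [mem_filter, mem_union, hedge] at hb ⊢
        obtain ⟨hbS, hne2, hor⟩ := hb
        rcases hor with h | h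
        · exact Or.inl ⟨hbS, h, hne2⟩
        · exact Or.inr ⟨hbS, h, hne2.symm⟩
      have h5 : (S.filter (edge j)).card ≤
          (S.filter (fun b => f j ∈ T b ∧ j ≠ b)).card +
          (S.filter (fun b => f b ∈ T j ∧ b ≠ j)).card :=
        le_trans (Finset.card_le_card hsub) (Finset.card_union_le _ _)
      have h6 := hA j S
      omega
    have h7 : (M + 2) * S.card ≤ ∑ j ∈ S, (S.filter (fun b => f b ∈ T j ∧ b ≠ j)).card := by
      calc (M + 2) * S.card = ∑ _j ∈ S, (M + 2) := by
            rw [Finset.sum_const, smul_eq_mul, mul_comm]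
        _ ≤ _ := Finset.sum_le_sum hbig
    have hcard : 0 < S.card := Finset.card_pos.mpr hS
    have h8 := le_trans h7 hsum
    have h9 : M + 2 ≤ M - 1 := Nat.le_of_mul_le_mul_right h8 hcard
    omega
  obtain ⟨V, _, hVcard, hVindep⟩ := aux_indep M edge hsymm hmin Finset.univ
  refine ⟨V, ?_, ?_⟩
  · calc Fintype.card W = (Finset.univ : Finset W).card := rfl
      _ ≤ (2 * M + 1) * V.card := hVcard
      _ ≤ 4 * M * V.card := Nat.mul_le_mul_right _ (by omega)
  · intro j hjV
    refine ⟨f j, hf j, ?_⟩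
    intro j' hj'V hne' hmem
    exact hVindep j hjV j' hj'V (Ne.symm hne') ⟨Ne.symm hne', Or.inl hmem⟩
end
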